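/- arXiv:1710.01038 — 6 statements merged into one kernel-verified Lean document; each statement's English description precedes it below -/
import Mathlib

section
/- Let K be a field, V a finite-dimensional vector space over an algebraically closed extension L of K, and T : V → V a linear operator whose matrix has entries in K. If the characteristic polynomial of T has a root α that is inseparable over K, then T is not diagonalizable over L. -/
open Polynomial

private lemma conj_pow_aux {A : Type*} [Ring A] (u : Aˣ) (x : A) (k : ℕ) :
    ((u : A) * x * (↑u⁻¹ : A)) ^ k = (u : A) * x ^ k * (↑u⁻¹ : A) := by
  induction k with
  | zero => simp
  | succ k hk =>
      rw [pow_succ, hk, pow_succ]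
      simp only [mul_assoc, Units.inv_mul_cancel_left]

private lemma aeval_conj_aux {R A : Type*} [CommSemiring R] [Ring A] [Algebra R A]
    (u : Aˣ) (x : A) (p : R[X]) :
    Polynomial.aeval ((u : A) * x * (↑u⁻¹ : A)) p
      = (u : A) * Polynomial.aeval x p * (↑u⁻¹ : A) := by
  rw [Polynomial.aeval_eq_sum_range (x := (u : A) * x * (↑u⁻¹ : A)),
    Polynomial.aeval_eq_sum_range (x := x), Finset.mul_sum, Finset.sum_mul]
  refine Finset.sum_congr rfl fun i _ => ?_
  rw [conj_pow_aux, mul_smul_comm, smul_mul_assoc]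

/-- If the characteristic polynomial of a matrix with entries in `K`, viewed over an
algebraically closed extension `L`, has a root `α` inseparable over `K`, then the
matrix is not diagonalizable over `L`. -/
theorem stmt0 {K L : Type*} [Field K] [Field L] [Algebra K L] [IsAlgClosed L]
    {n : Type*} [Fintype n] [DecidableEq n]
    (A : Matrix n n K) (α : L)
    (hroot : ((A.map (algebraMap K L)).charpoly).IsRoot α)
    (hinsep : ¬ (minpoly K α).Separable) :
    ¬ ∃ P : Matrix n n L, IsUnit P ∧ (P⁻¹ * A.map (algebraMap K L) * P).IsDiag := by
  classical
  rintro ⟨P, hP, hD⟩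
  obtain ⟨u, rfl⟩ := hP
  set f := algebraMap K L with hf
  set M : Matrix n n L := A.map f with hM
  -- the base-change algebra hom on matrices
  set Φ : Matrix n n K →ₐ[K] Matrix n n L := (Algebra.ofId K L).mapMatrix with hΦ
  have hΦA : Φ A = M := rfl
  have hΦpow : ∀ i : ℕ, M ^ i = (A ^ i).map f := by
    intro i
    rw [← hΦA, ← map_pow]
    rfl
  -- K-annihilators of A give L-annihilators of M
  have key : ∀ p : K[X], Polynomial.aeval A p = 0 → Polynomial.aeval M (p.map f) = 0 := by
    intro p hp
    rw [hf, Polynomial.aeval_map_algebraMap, ← hΦA, Polynomial.aeval_algHom_apply, hp, map_zero]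
  -- the diagonal matrix
  set D : Matrix n n L := (↑u : Matrix n n L)⁻¹ * M * (↑u : Matrix n n L) with hDdef
  have hD' : D = (↑u⁻¹ : Matrix n n L) * M * (↑u : Matrix n n L) := by
    rw [hDdef, Matrix.coe_units_inv]
  have hMD : M = (↑u : Matrix n n L) * D * (↑u⁻¹ : Matrix n n L) := by
    rw [hD']
    simp only [mul_assoc, Units.mul_inv_cancel_left, Units.mul_inv, mul_one]
  have hDdiag : D = Matrix.diagonal D.diag := hD.diagonal_diag.symm
  -- the separable annihilating polynomial of D
  set s : Finset L := Finset.image D.diag Finset.univ with hs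
  set q : L[X] := ∏ d ∈ s, (X - C d) with hq
  have hqsep : q.Separable := by
    rw [hq]
    exact Polynomial.separable_prod_X_sub_C_iff'.mpr fun x _ y _ h => h
  have hqD : Polynomial.aeval D q = 0 := by
    have h0 : ∀ x : n, Polynomial.aeval (D.diag x) q = 0 := by
      intro x
      have : Polynomial.eval (D.diag x) q = 0 := by
        rw [hq, Polynomial.eval_prod]
        exact Finset.prod_eq_zero
          (Finset.mem_image_of_mem D.diag (Finset.mem_univ x)) (by simp)
      rwa [← Polynomial.coe_aeval_eq_eval] at this
    have h1 : Polynomial.aeval (D.diag : n → L) q = 0 := by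
      funext x
      exact ((Polynomial.aeval_algHom_apply (Pi.evalAlgHom L (fun _ : n => L) x)
        D.diag q).symm.trans (h0 x))
    calc Polynomial.aeval D q
        = Polynomial.aeval ((Matrix.diagonalAlgHom (n := n) (α := L) (R := L) : (n → L) →ₐ[L] Matrix n n L) D.diag) q := by
          rw [Matrix.diagonalAlgHom_apply, ← hDdiag]
      _ = (Matrix.diagonalAlgHom (n := n) (α := L) (R := L) : (n → L) →ₐ[L] Matrix n n L)
            (Polynomial.aeval (D.diag : n → L) q) := Polynomial.aeval_algHom_apply _ _ _
      _ = 0 := by rw [h1, map_zero]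
  have hqM : Polynomial.aeval M q = 0 := by
    rw [hMD, aeval_conj_aux, hqD, mul_zero, zero_mul]
  -- α is an eigenvalue of M
  have hdet : (α • (1 : Matrix n n L) - M).det = 0 := by
    have h1 : ((Polynomial.evalRingHom α).mapMatrix M.charmatrix).det
        = Polynomial.eval α M.charpoly := by
      rw [Matrix.charpoly]
      exact (RingHom.map_det _ _).symm
    have h2 : (Polynomial.evalRingHom α).mapMatrix M.charmatrix
        = α • (1 : Matrix n n L) - M := by
      rw [RingHom.mapMatrix_apply]
      ext i j
      by_cases h : i = j <;>
        simp [h, Matrix.charmatrix_apply, Matrix.diagonal_apply, Matrix.one_apply,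
          Matrix.sub_apply, Matrix.smul_apply]
    rw [← h2, h1]
    exact hroot
  obtain ⟨v, hv0, hv⟩ := Matrix.exists_mulVec_eq_zero_iff.mpr hdet
  have hev : M.mulVec v = α • v := by
    rw [Matrix.sub_mulVec, Matrix.smul_mulVec, Matrix.one_mulVec, sub_eq_zero] at hv
    exact hv.symm
  set g : Module.End L (n → L) := Matrix.toLinAlgEquiv' M with hg
  have hgv : g.HasEigenvector α v := by
    refine ⟨Module.End.mem_eigenspace_iff.mpr ?_, hv0⟩
    exact hev
  -- K-annihilators of A vanish at α
  have heval : ∀ p : K[X], Polynomial.aeval A p = 0 → Polynomial.aeval α p = 0 := by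
    intro p hp
    have h0 : Polynomial.aeval M (p.map f) = 0 := key p hp
    have h1 : Polynomial.aeval g (p.map f) = 0 := by
      have := Polynomial.aeval_algHom_apply
        (Matrix.toLinAlgEquiv' (R := L) (n := n)).toAlgHom M (p.map f)
      rw [h0, map_zero] at this
      exact this
    have h2 := Module.End.aeval_apply_of_hasEigenvector (p := p.map f) hgv
    rw [h1, LinearMap.zero_apply] at h2
    have h3 : Polynomial.eval α (p.map f) = 0 := by
      rcases smul_eq_zero.mp h2.symm with h | h
      · exact h
      · exact absurd h hv0
    rwa [Polynomial.eval_map, ← Polynomial.aeval_def] at h3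
  have hAint : IsIntegral K A := ⟨A.charpoly, A.charpoly_monic, A.aeval_self_charpoly⟩
  have hMint : IsIntegral L M := ⟨M.charpoly, M.charpoly_monic, M.aeval_self_charpoly⟩
  -- the minimal polynomials
  set μ : K[X] := minpoly K A with hμ
  set q₀ : L[X] := minpoly L M with hq₀
  have hq₀monic : q₀.Monic := minpoly.monic hMint
  have hμmonic : μ.Monic := minpoly.monic hAint
  have hq₀dvd : q₀ ∣ μ.map f := minpoly.dvd L M (key μ (minpoly.aeval K A))
  -- a K-linear retraction of the inclusion K → L
  obtain ⟨π, hπ⟩ := (Algebra.linearMap K L).exists_leftInverse_of_injective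
    (LinearMap.ker_eq_bot.mpr (algebraMap K L).injective)
  have hπ' : ∀ a : K, π (algebraMap K L a) = a := fun a => LinearMap.congr_fun hπ a
  -- project q₀ down to K
  set d : ℕ := q₀.natDegree with hd
  set p₀ : K[X] := ∑ i ∈ Finset.range (d + 1), C (π (q₀.coeff i)) * X ^ i with hp₀
  have hp₀coeff : ∀ t, t ≤ d → p₀.coeff t = π (q₀.coeff t) := by
    intro t ht
    rw [hp₀, Polynomial.finset_sum_coeff]
    simp only [Polynomial.coeff_C_mul, Polynomial.coeff_X_pow, mul_ite, mul_one, mul_zero,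
      Finset.sum_ite_eq', Finset.mem_range]
    simp [Nat.lt_succ_of_le ht]
  have hp₀deg : p₀.natDegree ≤ d := by
    rw [hp₀]
    exact Polynomial.natDegree_sum_le_of_forall_le _ _ fun i hi =>
      le_trans (Polynomial.natDegree_C_mul_X_pow_le _ _) (Nat.lt_succ_iff.mp (Finset.mem_range.mp hi))
  have hp₀monic : p₀.Monic := by
    refine Polynomial.monic_of_natDegree_le_of_coeff_eq_one d hp₀deg ?_
    rw [hp₀coeff d le_rfl, hd, hq₀monic.coeff_natDegree, ← map_one (algebraMap K L), hπ']
  -- p₀ annihilates A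
  have hAp₀ : Polynomial.aeval A p₀ = 0 := by
    have hsum : ∑ i ∈ Finset.range (d + 1), q₀.coeff i • M ^ i = 0 := by
      rw [← Polynomial.aeval_eq_sum_range]
      exact minpoly.aeval L M
    ext j k
    have hentry : ∑ i ∈ Finset.range (d + 1), q₀.coeff i * f ((A ^ i) j k) = 0 := by
      have := congrFun (congrFun hsum j) k
      simpa [Matrix.sum_apply, hΦpow, Matrix.smul_apply, Matrix.map_apply, smul_eq_mul] using this
    have hπsum : ∑ i ∈ Finset.range (d + 1), ((A ^ i) j k) * π (q₀.coeff i) = 0 := by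
      have h0 := congrArg π hentry
      rw [map_sum, map_zero] at h0
      rw [← h0]
      refine Finset.sum_congr rfl fun i _ => ?_
      have : q₀.coeff i * f ((A ^ i) j k) = ((A ^ i) j k) • q₀.coeff i := by
        rw [Algebra.smul_def, mul_comm]
      rw [this, map_smul, smul_eq_mul]
    have haeval : (Polynomial.aeval A p₀) j k
        = ∑ i ∈ Finset.range (d + 1), π (q₀.coeff i) * ((A ^ i) j k) := by
      rw [hp₀, map_sum, Matrix.sum_apply]
      refine Finset.sum_congr rfl fun i _ => ?_
      rw [map_mul, Polynomial.aeval_C, map_pow, Polynomial.aeval_X, ← Algebra.smul_def,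
        Matrix.smul_apply, smul_eq_mul]
    rw [haeval, Matrix.zero_apply]
    rw [← hπsum]
    exact Finset.sum_congr rfl fun i _ => mul_comm _ _
  -- degree comparison: deg μ ≤ deg q₀
  have hμdvdp₀ : μ ∣ p₀ := minpoly.dvd K A hAp₀
  have hμdeg : μ.natDegree ≤ d :=
    le_trans (Polynomial.natDegree_le_of_dvd hμdvdp₀ hp₀monic.ne_zero) hp₀deg
  have hmapdeg : (μ.map f).natDegree = μ.natDegree :=
    Polynomial.natDegree_map_eq_of_injective (algebraMap K L).injective μ
  -- hence q₀ = μ.map f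
  have heq : μ.map f = q₀ := by
    refine Polynomial.eq_of_monic_of_dvd_of_natDegree_le hq₀monic (hμmonic.map f) hq₀dvd ?_
    rw [hmapdeg]
    exact hμdeg
  -- conclude
  have hq₀q : q₀ ∣ q := minpoly.dvd L M hqM
  have hαμ : Polynomial.aeval α μ = 0 := heval μ (minpoly.aeval K A)
  have hmdvd : minpoly K α ∣ μ := minpoly.dvd K α hαμ
  have hmapdvd : (minpoly K α).map f ∣ q := by
    calc (minpoly K α).map f ∣ μ.map f := Polynomial.map_dvd f hmdvd
    _ = q₀ := heq
    _ ∣ q := hq₀q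
  have hsep : ((minpoly K α).map f).Separable := hqsep.of_dvd hmapdvd
  exact hinsep ((Polynomial.separable_map f).mp hsep)
end

section
/- Let p be a prime, q = p^r, and let n, j, a, b be natural numbers with 2 ≤ n ≤ j+1 ≤ q-1, 1 ≤ a < b ≤ n. Then p divides the binomial coefficient C(j+(n-a)(q-1), j+(n-b)(q-1)). -/
/-! Since `j + m (q - 1) = (j - m) + q m`, the two arguments have low parts `j + a - n < j + b - n`
below `q` and high parts `n - a`, `n - b`. Lucas' theorem applied to the low `r` base-`p` digits
gives `C ≡ C(j + a - n, j + b - n) · C(n - a, n - b) (mod p)`, and the first factor is `0`. -/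

open Nat

theorem Choose.choose_add_pow_mul_modEq {p : ℕ} [Fact p.Prime] (r : ℕ) {c d : ℕ} (s t : ℕ)
    (hc : c < p ^ r) (hd : d < p ^ r) :
    choose (c + p ^ r * s) (d + p ^ r * t) ≡ choose c d * choose s t [ZMOD p] := by
  induction r generalizing c d with
  | zero =>
    obtain rfl : c = 0 := by simpa using hc
    obtain rfl : d = 0 := by simpa using hd
    simp [Int.ModEq.refl]
  | succ r ih =>
    have hp : 0 < p := (Fact.out : p.Prime).pos
    have hmod (x u : ℕ) : (x + p ^ (r + 1) * u) % p = x % p := by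
      rw [pow_succ', mul_assoc, Nat.add_mul_mod_self_left]
    have hdiv (x u : ℕ) : (x + p ^ (r + 1) * u) / p = x / p + p ^ r * u := by
      rw [pow_succ', mul_assoc, Nat.add_mul_div_left _ _ hp]
    have hlt {x : ℕ} (hx : x < p ^ (r + 1)) : x / p < p ^ r :=
      Nat.div_lt_of_lt_mul (by rwa [← pow_succ'])
    calc (choose (c + p ^ (r + 1) * s) (d + p ^ (r + 1) * t) : ℤ)
        ≡ choose (c % p) (d % p) * choose (c / p + p ^ r * s) (d / p + p ^ r * t) [ZMOD p] := by
          rw [← hmod c s, ← hmod d t, ← hdiv c s, ← hdiv d t]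
          exact Choose.choose_modEq_choose_mod_mul_choose_div
      _ ≡ choose (c % p) (d % p) * (choose (c / p) (d / p) * choose s t) [ZMOD p] :=
          (ih (hlt hc) (hlt hd)).mul_left _
      _ = choose (c % p) (d % p) * choose (c / p) (d / p) * choose s t := by ring
      _ ≡ choose c d * choose s t [ZMOD p] :=
          (Choose.choose_modEq_choose_mod_mul_choose_div.symm).mul_right _

theorem Choose.prime_dvd_choose_add_pow_mul {p : ℕ} [Fact p.Prime] (r : ℕ) {c d : ℕ} (s t : ℕ)
    (hcd : c < d) (hd : d < p ^ r) :
    p ∣ choose (c + p ^ r * s) (d + p ^ r * t) := by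
  have h := Choose.choose_add_pow_mul_modEq r s t (hcd.trans hd) hd
  rw [choose_eq_zero_of_lt hcd, cast_zero, zero_mul] at h
  exact_mod_cast (Int.modEq_zero_iff_dvd.mp h)

theorem Nat.add_mul_sub_one_eq {j m : ℕ} (q : ℕ) (hm : m ≤ j) (hq : 0 < q) :
    j + m * (q - 1) = (j - m) + q * m := by
  obtain ⟨q, rfl⟩ : ∃ q', q = q' + 1 := ⟨q - 1, by omega⟩
  rw [Nat.add_sub_cancel, Nat.add_mul, one_mul, mul_comm]
  omega

theorem stmt2_general (p r q n j a b : ℕ) (hp : p.Prime) (hq : q = p ^ r)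
    (hnj : n ≤ j + 1) (hjq : j + 1 ≤ q - 1)
    (ha : 1 ≤ a) (hab : a < b) (hbn : b ≤ n) :
    p ∣ Nat.choose (j + (n - a) * (q - 1)) (j + (n - b) * (q - 1)) := by
  have : Fact p.Prime := ⟨hp⟩
  rw [Nat.add_mul_sub_one_eq q (by omega) (by omega),
    Nat.add_mul_sub_one_eq q (by omega) (by omega), hq]
  exact Choose.prime_dvd_choose_add_pow_mul r _ _ (by omega) (by omega)

/-- With `2 ≤ n ≤ j+1 ≤ q-1` and `1 ≤ a < b ≤ n`, the binomial coefficient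
`C(j+(n-a)(q-1), j+(n-b)(q-1))` is divisible by `p`. -/
theorem stmt2 (p r q n j a b : ℕ) (hp : p.Prime) (hq : q = p ^ r)
    (hn : 2 ≤ n) (hnj : n ≤ j + 1) (hjq : j + 1 ≤ q - 1)
    (ha : 1 ≤ a) (hab : a < b) (hbn : b ≤ n) :
    p ∣ Nat.choose (j + (n - a) * (q - 1)) (j + (n - b) * (q - 1)) :=
  stmt2_general p r q n j a b hp hq hnj hjq ha hab hbn
end

section
/- Let p be a prime, q = p^r with q ≥ 2, and let n, j, a be natural numbers with 2 ≤ n ≤ j+1 ≤ q-1, 1 ≤ a ≤ n, and 2a ≠ n+1. Then p divides the binomial coefficient C(j+(n-a)(q-1), j+(a-1)(q-1)). -/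
open Nat Finset

/-- If every base-`p` digit of `k` below position `r` is at most the corresponding digit of `n`,
then `k % p^r ≤ n % p^r`. -/
lemma digits_le_imp_mod_le (p : ℕ) : ∀ (r n k : ℕ),
    (∀ i < r, k / p ^ i % p ≤ n / p ^ i % p) → k % p ^ r ≤ n % p ^ r := by
  intro r
  induction r with
  | zero => intro n k _; simp [Nat.mod_one]
  | succ r ih =>
    intro n k h
    have hk : k % p ^ (r + 1) = k % p ^ r + p ^ r * (k / p ^ r % p) := by
      rw [pow_succ, Nat.mod_mul]
    have hn : n % p ^ (r + 1) = n % p ^ r + p ^ r * (n / p ^ r % p) := by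
      rw [pow_succ, Nat.mod_mul]
    rw [hk, hn]
    exact Nat.add_le_add (ih n k fun i hi => h i (Nat.lt_succ_of_lt hi))
      (Nat.mul_le_mul_left _ (h r (Nat.lt_succ_self r)))

/-- With `2 ≤ n ≤ j+1 ≤ q-1`, `1 ≤ a ≤ n` and `2a ≠ n+1`, the diagonal binomial
coefficient `C(j+(n-a)(q-1), j+(a-1)(q-1))` is divisible by `p`. -/
theorem stmt3 (p r q n j a : ℕ) (hp : p.Prime) (hq : q = p ^ r) (hq2 : 2 ≤ q)
    (hn : 2 ≤ n) (hnj : n ≤ j + 1) (hjq : j + 1 ≤ q - 1)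
    (ha : 1 ≤ a) (han : a ≤ n) (hcenter : 2 * a ≠ n + 1) :
    p ∣ Nat.choose (j + (n - a) * (q - 1)) (j + (a - 1) * (q - 1)) := by
  haveI : Fact p.Prime := ⟨hp⟩
  set N := j + (n - a) * (q - 1) with hN
  set K := j + (a - 1) * (q - 1) with hK
  set A := n - a with hA
  set B := a - 1 with hB
  have hAj : A ≤ j := by omega
  have hBj : B ≤ j := by omega
  -- rewrite in base q
  have key : ∀ C : ℕ, C ≤ j → j + C * (q - 1) = C * q + (j - C) := by
    intro C hC
    have h1 : C * (q - 1) + C * 1 = C * q := by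
      rw [← Nat.mul_add]
      congr 1
      omega
    omega
  have hNeq : N = A * q + (j - A) := key A hAj
  have hKeq : K = B * q + (j - B) := key B hBj
  have hsq : j - A < q := by omega
  have htq : j - B < q := by omega
  have hNdiv : N / q = A := by
    rw [hNeq, Nat.add_comm, Nat.add_mul_div_right _ _ (by omega : 0 < q),
      Nat.div_eq_of_lt hsq, Nat.zero_add]
  have hKdiv : K / q = B := by
    rw [hKeq, Nat.add_comm, Nat.add_mul_div_right _ _ (by omega : 0 < q),
      Nat.div_eq_of_lt htq, Nat.zero_add]
  have hNmod : N % q = j - A := by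
    rw [hNeq, Nat.add_comm, Nat.add_mul_mod_self_right, Nat.mod_eq_of_lt hsq]
  have hKmod : K % q = j - B := by
    rw [hKeq, Nat.add_comm, Nat.add_mul_mod_self_right, Nat.mod_eq_of_lt htq]
  have lucas := Choose.choose_modEq_choose_mul_prod_range_choose (n := N) (k := K) (p := p) r
  rw [← hq] at lucas
  rw [hNdiv, hKdiv] at lucas
  have hzero : (Nat.choose N K : ℤ) ≡ 0 [ZMOD p] := by
    rcases Nat.lt_or_ge (2 * a) (n + 1) with hlt | hge
    · -- 2a < n+1 : lower part vanishes, some digit of K exceeds that of N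
      have hst : N % q < K % q := by
        rw [hNmod, hKmod]; omega
      have : ¬ (∀ i < r, K / p ^ i % p ≤ N / p ^ i % p) := by
        intro hall
        have := digits_le_imp_mod_le p r N K hall
        rw [← hq] at this
        omega
      push_neg at this
      obtain ⟨i, hi, hdig⟩ := this
      have hfac : Nat.choose (N / p ^ i % p) (K / p ^ i % p) = 0 :=
        Nat.choose_eq_zero_of_lt hdig
      calc (Nat.choose N K : ℤ)
          ≡ Nat.choose A B * ∏ i ∈ range r,
              Nat.choose (N / p ^ i % p) (K / p ^ i % p) [ZMOD p] := lucas
        _ = 0 := by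
            rw [Finset.prod_eq_zero (Finset.mem_range.mpr hi) hfac]
            simp
    · -- 2a > n+1 : top part vanishes
      have hAB : A < B := by omega
      have hfac : Nat.choose A B = 0 := Nat.choose_eq_zero_of_lt hAB
      calc (Nat.choose N K : ℤ)
          ≡ Nat.choose A B * ∏ i ∈ range r,
              Nat.choose (N / p ^ i % p) (K / p ^ i % p) [ZMOD p] := lucas
        _ = 0 := by rw [hfac]; simp
  have : (p : ℤ) ∣ (Nat.choose N K : ℤ) := by
    have := hzero.dvd
    simpa using Int.ModEq.dvd hzero.symm
  exact_mod_cast this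
end

section
/- Let R be a commutative ring, n ≥ 2, and let A be the n×n antidiagonal matrix over R[t] with entry A_{a, n+1-a} = ε · t^{j+1+(n-a)(q-1)} for a fixed sign ε = ±1 and fixed natural numbers j, q with q ≥ 2, and zeros elsewhere. Set k = 2j+2+(n-1)(q-1). Then the characteristic polynomial of A equals (X^2 - t^k)^{n/2} if n is even, and (X^2 - t^k)^{(n-1)/2} · (X - ε t^{k/2}) if n is odd (note k is even when n is odd). -/
open Polynomial Matrix

def pairEquiv (m : ℕ) : Fin 2 × Fin m ≃ Fin (2*m) where
  toFun p := ⟨if (p.1 : ℕ) = 0 then (p.2 : ℕ) else 2*m-1-(p.2 : ℕ), by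
    have := p.2.isLt; split <;> omega⟩
  invFun a := if h : (a : ℕ) < m then (0, ⟨a, h⟩) else
    (1, ⟨2*m-1-(a : ℕ), by have := a.isLt; omega⟩)
  left_inv := by
    rintro ⟨s, i⟩
    have hi := i.isLt
    have hs := s.isLt
    dsimp only
    by_cases h : (s : ℕ) = 0 <;> simp only [h, if_true, if_false, reduceIte]
    · rw [dif_pos (by simpa using hi)]
      exact Prod.ext (Fin.ext h.symm) rfl
    · rw [dif_neg (by omega)]
      refine Prod.ext (Fin.ext ?_) (Fin.ext ?_) <;>
        simp only [Fin.val_one, Fin.val_mk] <;> omega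
  right_inv := by
    intro a
    have ha := a.isLt
    dsimp only
    by_cases h : (a : ℕ) < m
    · rw [dif_pos h]; simp
    · rw [dif_neg h]
      refine Fin.ext ?_
      simp only [Fin.val_one, Fin.val_mk, if_neg, one_ne_zero, reduceIte]
      omega

theorem det_even {S : Type*} [CommRing S] (m : ℕ) (u : S) (d : ℕ → S) :
    Matrix.det (Matrix.of fun a b : Fin (2*m) =>
      (if (a:ℕ) = (b:ℕ) then u else 0) - (if (a:ℕ)+(b:ℕ)+1 = 2*m then d (a:ℕ) else 0))
    = ∏ i : Fin m, (u*u - d (i:ℕ) * d (2*m-1-(i:ℕ))) := by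
  rw [← Matrix.det_submatrix_equiv_self (pairEquiv m)]
  have : (Matrix.of fun a b : Fin (2*m) =>
      (if (a:ℕ) = (b:ℕ) then u else 0) - (if (a:ℕ)+(b:ℕ)+1 = 2*m then d (a:ℕ) else 0)).submatrix
      (pairEquiv m) (pairEquiv m)
      = Matrix.blockDiagonal (fun i : Fin m => !![u, -d (i:ℕ); -d (2*m-1-(i:ℕ)), u]) := by
    ext ⟨s, i⟩ ⟨t, j⟩
    have hi := i.isLt; have hj := j.isLt
    simp only [Matrix.submatrix_apply, Matrix.of_apply, Matrix.blockDiagonal_apply, pairEquiv,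
      Equiv.coe_fn_mk]
    fin_cases s <;> fin_cases t <;>
      simp only [Fin.isValue, Fin.val_zero, Fin.val_one, if_true, if_false, reduceIte,
        Fin.ext_iff, Matrix.cons_val', Matrix.cons_val_zero, Matrix.cons_val_one,
        Matrix.head_cons, Matrix.head_fin_const, Matrix.empty_val', Matrix.cons_val_fin_one,
        OfNat.ofNat_ne_zero] <;>
      split_ifs <;> first
        | contradiction
        | (exfalso; omega)
        | simp
  rw [this, Matrix.det_blockDiagonal]
  congr 1; funext i
  rw [Matrix.det_fin_two_of]; ring

def pairEquivOdd (m : ℕ) : (Fin 2 × Fin m) ⊕ Fin 1 ≃ Fin (2*m+1) where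
  toFun p := p.elim (fun p => ⟨if (p.1 : ℕ) = 0 then (p.2 : ℕ) else 2*m-(p.2 : ℕ), by
    have := p.2.isLt; split <;> omega⟩) (fun _ => ⟨m, by omega⟩)
  invFun a := if h : (a : ℕ) < m then .inl (0, ⟨a, h⟩) else if h2 : (a : ℕ) = m then .inr 0 else
    .inl (1, ⟨2*m-(a : ℕ), by have := a.isLt; omega⟩)
  left_inv := by
    rintro (⟨s, i⟩ | z)
    · have hi := i.isLt
      have hs := s.isLt
      dsimp only [Sum.elim_inl]
      by_cases h : (s : ℕ) = 0 <;> simp only [h, if_true, if_false, reduceIte]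
      · rw [dif_pos (by simpa using hi)]
        exact congrArg Sum.inl (Prod.ext (Fin.ext h.symm) rfl)
      · rw [dif_neg (by omega), dif_neg (by omega)]
        refine congrArg Sum.inl (Prod.ext (Fin.ext ?_) (Fin.ext ?_)) <;>
          simp only [Fin.val_one, Fin.val_mk] <;> omega
    · dsimp only [Sum.elim_inr]
      rw [dif_neg (by simp), dif_pos (by simp)]
      exact congrArg Sum.inr (Subsingleton.elim _ _)
  right_inv := by
    intro a
    have ha := a.isLt
    dsimp only
    by_cases h : (a : ℕ) < m
    · rw [dif_pos h]; simp
    · by_cases h2 : (a : ℕ) = m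
      · rw [dif_neg h, dif_pos h2]
        exact Fin.ext (by simpa using h2.symm)
      · rw [dif_neg h, dif_neg h2]
        refine Fin.ext ?_
        simp only [Sum.elim_inl, Fin.val_one, Fin.val_mk, one_ne_zero, reduceIte]
        omega

theorem det_odd {S : Type*} [CommRing S] (m : ℕ) (u : S) (d : ℕ → S) :
    Matrix.det (Matrix.of fun a b : Fin (2*m+1) =>
      (if (a:ℕ) = (b:ℕ) then u else 0) - (if (a:ℕ)+(b:ℕ)+1 = 2*m+1 then d (a:ℕ) else 0))
    = (∏ i : Fin m, (u*u - d (i:ℕ) * d (2*m-(i:ℕ)))) * (u - d m) := by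
  rw [← Matrix.det_submatrix_equiv_self (pairEquivOdd m)]
  have : (Matrix.of fun a b : Fin (2*m+1) =>
      (if (a:ℕ) = (b:ℕ) then u else 0) - (if (a:ℕ)+(b:ℕ)+1 = 2*m+1 then d (a:ℕ) else 0)).submatrix
      (pairEquivOdd m) (pairEquivOdd m)
      = Matrix.fromBlocks
          (Matrix.blockDiagonal (fun i : Fin m => !![u, -d (i:ℕ); -d (2*m-(i:ℕ)), u]))
          0 0 !![u - d m] := by
    ext (⟨s, i⟩ | z) (⟨t, j⟩ | w)
    · have hi := i.isLt; have hj := j.isLt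
      simp only [Matrix.submatrix_apply, Matrix.of_apply, Matrix.blockDiagonal_apply, pairEquivOdd,
        Equiv.coe_fn_mk, Sum.elim_inl, Matrix.fromBlocks_apply₁₁]
      fin_cases s <;> fin_cases t <;>
        simp only [Fin.isValue, Fin.val_zero, Fin.val_one, if_true, if_false, reduceIte,
          Fin.ext_iff, Matrix.cons_val', Matrix.cons_val_zero, Matrix.cons_val_one,
          Matrix.head_cons, Matrix.head_fin_const, Matrix.empty_val', Matrix.cons_val_fin_one,
          OfNat.ofNat_ne_zero] <;>
        split_ifs <;> first
          | contradiction
          | (exfalso; omega)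
          | simp
    · have hi := i.isLt
      simp only [Matrix.submatrix_apply, Matrix.of_apply, pairEquivOdd,
        Equiv.coe_fn_mk, Sum.elim_inl, Sum.elim_inr, Matrix.fromBlocks_apply₁₂,
        Matrix.zero_apply]
      fin_cases s <;>
        split_ifs <;> first | contradiction | (exfalso; omega) | simp
    · have hj := j.isLt
      simp only [Matrix.submatrix_apply, Matrix.of_apply, pairEquivOdd,
        Equiv.coe_fn_mk, Sum.elim_inl, Sum.elim_inr, Matrix.fromBlocks_apply₂₁,
        Matrix.zero_apply]
      fin_cases t <;>
        split_ifs <;> first | contradiction | (exfalso; omega) | simp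
    · simp only [Matrix.submatrix_apply, Matrix.of_apply, pairEquivOdd,
        Equiv.coe_fn_mk, Sum.elim_inr, Matrix.fromBlocks_apply₂₂, Fin.val_mk]
      have hmm : m + m + 1 = 2*m+1 := by omega
      simp [hmm, Subsingleton.elim z 0, Subsingleton.elim w 0]
  rw [this, Matrix.det_fromBlocks_zero₂₁, Matrix.det_blockDiagonal, Matrix.det_fin_one_of]
  congr 1
  refine Finset.prod_congr rfl fun i _ => ?_
  rw [Matrix.det_fin_two_of]; ring

private theorem even_case {R : Type*} [CommRing R] (n j q k : ℕ) (hq : 2 ≤ q)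
    (ε : R) (hε : ε = 1 ∨ ε = -1) (hk : k = 2 * j + 2 + (n - 1) * (q - 1))
    (A : Matrix (Fin n) (Fin n) (Polynomial R))
    (hA : ∀ a b : Fin n, A a b =
      if (a : ℕ) + (b : ℕ) + 1 = n
      then C ε * (X : Polynomial R) ^ (j + 1 + (n - 1 - (a : ℕ)) * (q - 1))
      else 0) (m : ℕ) (hm : n = 2*m) :
    A.charpoly = ((X : Polynomial (Polynomial R)) ^ 2 - C ((X : Polynomial R) ^ k)) ^ (n / 2) := by
  subst hm
  have hεε : ε * ε = 1 := by rcases hε with h | h <;> rw [h] <;> ring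
  have hM : charmatrix A = Matrix.of (fun a b : Fin (2*m) =>
      (if (a:ℕ) = (b:ℕ) then X else 0) -
      (if (a:ℕ)+(b:ℕ)+1 = 2*m then
        (fun a : ℕ => C (C ε * X ^ (j + 1 + (2*m - 1 - a) * (q - 1)))) (a:ℕ) else 0)) := by
    ext a b
    rw [charmatrix_apply, hA]
    simp only [Matrix.of_apply, Matrix.diagonal_apply, Fin.ext_iff,
      apply_ite (C : Polynomial R → Polynomial (Polynomial R)), map_zero]
  rw [Matrix.charpoly, hM, det_even m X (fun a : ℕ => C (C ε * X ^ (j + 1 + (2*m - 1 - a) * (q - 1))))]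
  have hfac : ∀ i : Fin m,
      ((X : Polynomial (Polynomial R)) * X -
        (fun a : ℕ => C (C ε * X ^ (j + 1 + (2*m - 1 - a) * (q - 1)))) (i:ℕ) *
        (fun a : ℕ => C (C ε * X ^ (j + 1 + (2*m - 1 - a) * (q - 1)))) (2*m-1-(i:ℕ)))
      = X ^ 2 - C ((X : Polynomial R) ^ k) := by
    intro i
    have hi := i.isLt
    have he2 : 2*m-1-(2*m-1-(i:ℕ)) = (i:ℕ) := by omega
    have hsum : (j + 1 + (2*m-1-(i:ℕ)) * (q - 1)) + (j + 1 + (i:ℕ) * (q - 1)) = k := by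
      have h1 : 2*j+2+((2*m-1-(i:ℕ)) + (i:ℕ))*(q-1) = 2*j+2+(2*m-1)*(q-1) := by
        congr 2; omega
      rw [hk]
      calc (j + 1 + (2*m-1-(i:ℕ)) * (q - 1)) + (j + 1 + (i:ℕ) * (q - 1))
          = 2*j+2+((2*m-1-(i:ℕ)) + (i:ℕ))*(q-1) := by ring
        _ = 2*j+2+(2*m-1)*(q-1) := h1
    dsimp only
    rw [he2, ← C_mul, ← sq]
    congr 2
    calc C ε * X ^ (j + 1 + (2*m - 1 - (i:ℕ)) * (q - 1)) *
          (C ε * X ^ (j + 1 + (i:ℕ) * (q - 1)))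
        = C (ε * ε) * X ^ ((j + 1 + (2*m-1-(i:ℕ)) * (q - 1)) + (j + 1 + (i:ℕ) * (q - 1))) := by
          rw [C_mul, pow_add]; ring
      _ = (X : Polynomial R) ^ k := by rw [hεε, hsum, C_1, one_mul]
  calc ∏ i : Fin m, ((X : Polynomial (Polynomial R)) * X -
        (fun a : ℕ => C (C ε * X ^ (j + 1 + (2*m - 1 - a) * (q - 1)))) (i:ℕ) *
        (fun a : ℕ => C (C ε * X ^ (j + 1 + (2*m - 1 - a) * (q - 1)))) (2*m-1-(i:ℕ)))
      = ∏ _i : Fin m, ((X : Polynomial (Polynomial R)) ^ 2 - C ((X : Polynomial R) ^ k)) :=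
        Finset.prod_congr rfl fun i _ => hfac i
    _ = ((X : Polynomial (Polynomial R)) ^ 2 - C ((X : Polynomial R) ^ k)) ^ (2*m/2) := by
        rw [Finset.prod_const, Finset.card_univ, Fintype.card_fin]
        congr 1; omega
private theorem odd_case {R : Type*} [CommRing R] (n j q k : ℕ) (hq : 2 ≤ q)
    (ε : R) (hε : ε = 1 ∨ ε = -1) (hk : k = 2 * j + 2 + (n - 1) * (q - 1))
    (A : Matrix (Fin n) (Fin n) (Polynomial R))
    (hA : ∀ a b : Fin n, A a b =
      if (a : ℕ) + (b : ℕ) + 1 = n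
      then C ε * (X : Polynomial R) ^ (j + 1 + (n - 1 - (a : ℕ)) * (q - 1))
      else 0) (m : ℕ) (hm : n = 2*m+1) :
    A.charpoly = ((X : Polynomial (Polynomial R)) ^ 2 - C ((X : Polynomial R) ^ k)) ^ ((n-1) / 2) *
        ((X : Polynomial (Polynomial R)) - C (C ε * (X : Polynomial R) ^ (k / 2))) := by
  subst hm
  have hεε : ε * ε = 1 := by rcases hε with h | h <;> rw [h] <;> ring
  have hk2 : k = 2 * (j + 1 + m * (q-1)) := by
    rw [hk]
    have : 2*m+1-1 = 2*m := by omega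
    rw [this]; ring
  have hM : charmatrix A = Matrix.of (fun a b : Fin (2*m+1) =>
      (if (a:ℕ) = (b:ℕ) then X else 0) -
      (if (a:ℕ)+(b:ℕ)+1 = 2*m+1 then
        (fun a : ℕ => C (C ε * X ^ (j + 1 + (2*m+1 - 1 - a) * (q - 1)))) (a:ℕ) else 0)) := by
    ext a b
    rw [charmatrix_apply, hA]
    simp only [Matrix.of_apply, Matrix.diagonal_apply, Fin.ext_iff,
      apply_ite (C : Polynomial R → Polynomial (Polynomial R)), map_zero]
  rw [Matrix.charpoly, hM,
    det_odd m X (fun a : ℕ => C (C ε * X ^ (j + 1 + (2*m+1 - 1 - a) * (q - 1))))]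
  have hfac : ∀ i : Fin m,
      ((X : Polynomial (Polynomial R)) * X -
        C (C ε * X ^ (j + 1 + (2*m+1 - 1 - (i:ℕ)) * (q - 1))) *
        C (C ε * X ^ (j + 1 + (2*m+1 - 1 - (2*m-(i:ℕ))) * (q - 1))))
      = X ^ 2 - C ((X : Polynomial R) ^ k) := by
    intro i
    have hi := i.isLt
    have he1 : 2*m+1-1-(i:ℕ) = 2*m-(i:ℕ) := by omega
    have he2 : 2*m+1-1-(2*m-(i:ℕ)) = (i:ℕ) := by omega
    have hsum : (j + 1 + (2*m-(i:ℕ)) * (q - 1)) + (j + 1 + (i:ℕ) * (q - 1)) = k := by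
      have h1 : 2*j+2+((2*m-(i:ℕ)) + (i:ℕ))*(q-1) = 2*j+2+(2*m)*(q-1) := by
        congr 2; omega
      rw [hk2]
      calc (j + 1 + (2*m-(i:ℕ)) * (q - 1)) + (j + 1 + (i:ℕ) * (q - 1))
          = 2*j+2+((2*m-(i:ℕ)) + (i:ℕ))*(q-1) := by ring
        _ = 2*j+2+(2*m)*(q-1) := h1
        _ = 2 * (j + 1 + m * (q-1)) := by ring
    rw [he1, he2, ← C_mul, ← sq]
    congr 2
    calc C ε * X ^ (j + 1 + (2*m - (i:ℕ)) * (q - 1)) *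
          (C ε * X ^ (j + 1 + (i:ℕ) * (q - 1)))
        = C (ε * ε) * X ^ ((j + 1 + (2*m-(i:ℕ)) * (q - 1)) + (j + 1 + (i:ℕ) * (q - 1))) := by
          rw [C_mul, pow_add]; ring
      _ = (X : Polynomial R) ^ k := by rw [hεε, hsum, C_1, one_mul]
  have hmid : (C ε * (X : Polynomial R) ^ (j + 1 + (2*m+1 - 1 - m) * (q - 1)))
      = C ε * (X : Polynomial R) ^ (k / 2) := by
    have h1 : 2*m+1-1-m = m := by omega
    have h2 : k / 2 = j + 1 + m * (q-1) := by omega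
    rw [h1, h2]
  have h1 : (∏ i : Fin m, ((X : Polynomial (Polynomial R)) * X -
        C (C ε * X ^ (j + 1 + (2*m+1 - 1 - (i:ℕ)) * (q - 1))) *
        C (C ε * X ^ (j + 1 + (2*m+1 - 1 - (2*m-(i:ℕ))) * (q - 1)))))
      = ((X : Polynomial (Polynomial R)) ^ 2 - C ((X : Polynomial R) ^ k)) ^ ((2*m+1-1)/2) := by
    calc (∏ i : Fin m, ((X : Polynomial (Polynomial R)) * X -
        C (C ε * X ^ (j + 1 + (2*m+1 - 1 - (i:ℕ)) * (q - 1))) *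
        C (C ε * X ^ (j + 1 + (2*m+1 - 1 - (2*m-(i:ℕ))) * (q - 1)))))
      = ∏ _i : Fin m, ((X : Polynomial (Polynomial R)) ^ 2 - C ((X : Polynomial R) ^ k)) :=
        Finset.prod_congr rfl fun i _ => hfac i
    _ = ((X : Polynomial (Polynomial R)) ^ 2 - C ((X : Polynomial R) ^ k)) ^ ((2*m+1-1)/2) := by
        rw [Finset.prod_const, Finset.card_univ, Fintype.card_fin]
        congr 1; omega
  rw [h1, hmid]


/-- The characteristic polynomial of the antidiagonal matrix with entries
`ε·t^(j+1+(n-a)(q-1))` is `(X² - t^k)^(n/2)` for even `n`, and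
`(X² - t^k)^((n-1)/2)·(X - ε t^(k/2))` for odd `n`, where `k = 2j+2+(n-1)(q-1)`. -/
theorem stmt5 {R : Type*} [CommRing R] (n j q k : ℕ) (hn : 2 ≤ n) (hq : 2 ≤ q)
    (ε : R) (hε : ε = 1 ∨ ε = -1) (hk : k = 2 * j + 2 + (n - 1) * (q - 1))
    (A : Matrix (Fin n) (Fin n) (Polynomial R))
    (hA : ∀ a b : Fin n, A a b =
      if (a : ℕ) + (b : ℕ) + 1 = n
      then C ε * (X : Polynomial R) ^ (j + 1 + (n - 1 - (a : ℕ)) * (q - 1))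
      else 0) :
    (Even n → A.charpoly =
      ((X : Polynomial (Polynomial R)) ^ 2 - C ((X : Polynomial R) ^ k)) ^ (n / 2)) ∧
    (Odd n → A.charpoly =
      ((X : Polynomial (Polynomial R)) ^ 2 - C ((X : Polynomial R) ^ k)) ^ ((n - 1) / 2) *
        ((X : Polynomial (Polynomial R)) - C (C ε * (X : Polynomial R) ^ (k / 2)))) := by
  refine ⟨fun he => ?_, fun ho => ?_⟩
  · obtain ⟨m, hm⟩ : ∃ m, n = 2*m := by rcases he with ⟨m, hm⟩; exact ⟨m, by omega⟩
    exact even_case n j q k hq ε hε hk A hA m hm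
  · obtain ⟨m, hm⟩ := ho
    exact odd_case n j q k hq ε hε hk A hA m hm
end

section
/- Let p be a prime, q = p^r, and j even with 2 ≤ j ≤ q−2, n = j+2 ≤ q. For 2 ≤ a ≤ n−1, p divides both C((j+2−a)q + (a−2), jq + (q−1)) and C((j+2−a)q + (a−2), j); hence the first-column entries m_{a,1} of M(j, j+2, q) vanish mod p for 2 ≤ a ≤ n−1, while m_{1,1} ≡ 1 (mod p). -/
open Nat

lemma lemA (p : ℕ) (hp : p.Prime) (d : ℕ) (hd : d < p) :
    ((Nat.choose (p - 1) d : ZMod p)) = (-1) ^ d := by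
  haveI := Fact.mk hp
  induction d with
  | zero => simp
  | succ d ih =>
    have hd' : d < p := by omega
    have key := Nat.choose_succ_right_eq (p - 1) d
    have hcast : ((Nat.choose (p-1) (d+1) : ZMod p)) * ((d+1 : ℕ) : ZMod p)
        = ((Nat.choose (p-1) d : ZMod p)) * ((p-1-d : ℕ) : ZMod p) := by
      exact_mod_cast congrArg (Nat.cast : ℕ → ZMod p) key
    have h2 : ((p-1-d : ℕ) : ZMod p) = -((d+1 : ℕ) : ZMod p) := by
      have he : p - 1 - d = p - (d+1) := by omega
      rw [he, Nat.cast_sub (by omega)]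
      simp
    have hne : ((d+1 : ℕ) : ZMod p) ≠ 0 := by
      rw [Ne, ZMod.natCast_eq_zero_iff]
      intro h
      have := Nat.le_of_dvd (by omega) h
      omega
    have goal : ((Nat.choose (p-1) (d+1) : ZMod p)) * ((d+1 : ℕ) : ZMod p)
        = (-1)^(d+1) * ((d+1 : ℕ) : ZMod p) := by
      rw [hcast, ih hd', h2]; ring
    exact mul_right_cancel₀ hne goal

lemma lemB (p : ℕ) (hp : p.Prime) (r j : ℕ) (hj : j < p ^ r) :
    ((Nat.choose (p ^ r - 1) j : ZMod p)) = (-1) ^ j := by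
  haveI := Fact.mk hp
  induction r generalizing j with
  | zero => simp at hj; simp [hj]
  | succ r ih =>
    have hp2 := hp.two_le
    have hq1 : 1 ≤ p ^ r := Nat.one_le_pow _ _ hp.pos
    have hq1' : 1 ≤ p ^ (r+1) := Nat.one_le_pow _ _ hp.pos
    have hdec : p ^ (r+1) - 1 = (p - 1) + (p ^ r - 1) * p := by
      zify [hp.pos, hq1, hq1']
      rw [pow_succ]; ring
    have hmod : (p ^ (r+1) - 1) % p = p - 1 := by
      rw [hdec, Nat.add_mul_mod_self_right, Nat.mod_eq_of_lt (by omega)]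
    have hdiv : (p ^ (r+1) - 1) / p = p ^ r - 1 := by
      rw [hdec, Nat.add_mul_div_right _ _ hp.pos, Nat.div_eq_of_lt (by omega)]
      omega
    have lucas := Choose.choose_modEq_choose_mod_mul_choose_div (p := p)
      (n := p ^ (r+1) - 1) (k := j)
    have hz : ((Nat.choose (p^(r+1)-1) j : ZMod p))
        = ((Nat.choose ((p^(r+1)-1) % p) (j % p) * Nat.choose ((p^(r+1)-1)/p) (j/p) : ℕ) : ZMod p) := by
      have := (ZMod.intCast_eq_intCast_iff _ _ _).mpr lucas
      push_cast at this ⊢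
      exact_mod_cast this
    rw [hz]
    push_cast
    rw [hmod, hdiv, lemA p hp _ (Nat.mod_lt _ hp.pos),
      ih (j/p) (Nat.div_lt_of_lt_mul (by rw [← _root_.pow_succ']; exact hj))]
    rw [← pow_add]
    have : (-1 : ZMod p) ^ (j % p + j / p) = (-1) ^ (j % p + p * (j / p)) := by
      rw [pow_add, pow_add, pow_mul, neg_one_pow_char (ZMod p) (p := p)]
    rw [this, Nat.mod_add_div]

lemma lemC (p : ℕ) (hp : p.Prime) (r m s j : ℕ) (hs : s < p ^ r) (hj : j < p ^ r) :
    ((Nat.choose (m * p ^ r + s) j : ZMod p)) = ((Nat.choose s j : ZMod p)) := by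
  haveI := Fact.mk hp
  induction r generalizing s j with
  | zero => simp at hs hj; simp [hs, hj]
  | succ r ih =>
    have hmod : (m * p ^ (r+1) + s) % p = s % p := by
      conv_lhs => rw [pow_succ, ← mul_assoc, mul_comm (m * p ^ r) p]
      rw [Nat.mul_add_mod]
    have hdiv : (m * p ^ (r+1) + s) / p = m * p ^ r + s / p := by
      conv_lhs => rw [pow_succ, ← mul_assoc, mul_comm (m * p ^ r) p]
      rw [Nat.mul_add_div hp.pos]
    have hs' : s / p < p ^ r := Nat.div_lt_of_lt_mul (by rw [← _root_.pow_succ']; exact hs)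
    have hj' : j / p < p ^ r := Nat.div_lt_of_lt_mul (by rw [← _root_.pow_succ']; exact hj)
    have lucas1 := Choose.choose_modEq_choose_mod_mul_choose_div (p := p)
      (n := m * p ^ (r+1) + s) (k := j)
    have lucas2 := Choose.choose_modEq_choose_mod_mul_choose_div (p := p) (n := s) (k := j)
    have hz1 := (ZMod.intCast_eq_intCast_iff _ _ _).mpr lucas1
    have hz2 := (ZMod.intCast_eq_intCast_iff _ _ _).mpr lucas2
    push_cast at hz1 hz2
    rw [hz1, hz2, hmod, hdiv, ih (s/p) (j/p) hs' hj']

/-- For `j` even with `2 ≤ j ≤ q−2` and `n = j+2 ≤ q`: for `2 ≤ a ≤ n−1` both binomials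
`C((j+2−a)q+(a−2), jq+(q−1))` and `C((j+2−a)q+(a−2), j)` vanish mod `p`, while the
top-left entry `(−1)^(j+2)·C(jq+q−1, j)` is `≡ 1 (mod p)`. -/
theorem stmt16 (p r q j n : ℕ) (hp : p.Prime) (hq : q = p ^ r)
    (hjeven : Even j) (hj2 : 2 ≤ j) (hjq : j ≤ q - 2) (hn : n = j + 2) (hnq : n ≤ q) :
    (∀ a : ℕ, 2 ≤ a → a ≤ n - 1 →
      p ∣ Nat.choose ((j + 2 - a) * q + (a - 2)) (j * q + (q - 1)) ∧
      p ∣ Nat.choose ((j + 2 - a) * q + (a - 2)) j) ∧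
    ((-1 : ℤ) ^ (j + 2) * (Nat.choose (j * q + (q - 1)) j : ℤ) ≡ 1 [ZMOD p]) := by
  haveI := Fact.mk hp
  have hq4 : 4 ≤ q := by omega
  constructor
  · intro a ha2 han
    have han' : a ≤ j + 1 := by omega
    constructor
    · have hlt : (j + 2 - a) * q + (a - 2) < j * q + (q - 1) := by
        have h1 : (j + 2 - a) * q ≤ j * q := Nat.mul_le_mul_right q (by omega)
        omega
      rw [Nat.choose_eq_zero_of_lt hlt]
      exact dvd_zero _
    · rw [← ZMod.natCast_eq_zero_iff]
      rw [hq] at *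
      rw [lemC p hp r (j + 2 - a) (a - 2) j (by omega) (by omega)]
      rw [Nat.choose_eq_zero_of_lt (by omega)]
      simp
  · apply (ZMod.intCast_eq_intCast_iff _ _ _).mp
    push_cast
    rw [Even.neg_one_pow (hjeven.add even_two), one_mul]
    rw [hq] at *
    rw [lemC p hp r j (p ^ r - 1) j (by omega) (by omega),
      lemB p hp r j (by omega), hjeven.neg_one_pow]
end

section
/- Let F be a field of odd characteristic, t transcendental over F, q ≥ 3 odd prime power, k = 4 + 3(q−1). The matrix M(1,4,q,t) = [[2t², −2t^{q+1}, −2t^{2q}, t^{3q−1}], [t², −t^{q+1}, −2t^{2q}, t^{3q−1}], [0, −t^{q+1}, 0, 0], [−t², 0, 0, 0]] over F(t) is diagonalizable over an algebraic closure of F(t), because its four eigenvalues 0, 2t² − t^{q+1}, t^{k/2}, −t^{k/2} are pairwise distinct (k is even since q is odd). -/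
/-!
With `q = 2j + 1` and `y = t^j`, the matrix is `t² • C(y)` for an explicit matrix `C(y)` whose
eigenvalues `0, 2 - y², y³, -y³` already lie in `F(t)`. The corresponding eigenvectors form a
matrix with determinant `-2 y⁵ (y² - 1)(y² - 2)(y⁴ + 4)`, which is nonzero because `2 ≠ 0` in `F`
and `y` is a nonconstant power of `t`; conjugating by it diagonalizes the matrix already over `F(t)`.
-/

open Matrix

theorem Matrix.isDiag_inv_mul_map_mul_of_mul_eq_mul_diagonal {n R S : Type*} [Fintype n]
    [DecidableEq n] [CommRing R] [CommRing S] (φ : R →+* S) {A P : Matrix n n R} {d : n → R}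
    (hP : IsUnit P.det) (hAP : A * P = P * diagonal d) :
    IsUnit (P.map φ) ∧ ((P.map φ)⁻¹ * A.map φ * P.map φ).IsDiag := by
  have hdet : IsUnit (P.map φ).det := by
    simpa [RingHom.map_det] using hP.map φ
  have hmul : A.map φ * P.map φ = P.map φ * diagonal (φ ∘ d) := by
    rw [← Matrix.map_mul, hAP, Matrix.map_mul, diagonal_map (map_zero φ)]; rfl
  refine ⟨(isUnit_iff_isUnit_det _).mpr hdet, ?_⟩
  rw [mul_assoc, hmul, ← mul_assoc, nonsing_inv_mul _ hdet, one_mul]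
  exact isDiag_diagonal _

theorem RatFunc.X_pow_sub_C_ne_zero {K : Type*} [Field K] {n : ℕ} (hn : 0 < n) (c : K) :
    (RatFunc.X : RatFunc K) ^ n - RatFunc.C c ≠ 0 := by
  rw [← RatFunc.algebraMap_X, ← RatFunc.algebraMap_C, ← map_pow, ← map_sub]
  exact RatFunc.algebraMap_ne_zero (Polynomial.X_pow_sub_C_ne_zero hn c)

namespace M14

variable {R : Type*} [CommRing R]

def core (y : R) : Matrix (Fin 4) (Fin 4) R :=
  !![2, -2 * y ^ 2, -2 * y ^ 4, y ^ 6;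
     1, -y ^ 2, -2 * y ^ 4, y ^ 6;
     0, -y ^ 2, 0, 0;
     -1, 0, 0, 0]

def eigenvectors (y : R) : Matrix (Fin 4) (Fin 4) R :=
  !![0, -2 * (2 - y ^ 2), y ^ 6 - y ^ 5, y ^ 6 + y ^ 5;
     0, -(2 - y ^ 2), y ^ 6 - y ^ 3, y ^ 6 + y ^ 3;
     y ^ 2, y ^ 2, y ^ 2 - y ^ 5, y ^ 2 + y ^ 5;
     2, 2, y ^ 2 - y ^ 3, y ^ 2 + y ^ 3]

def eigenvalues (y : R) : Fin 4 → R := ![0, 2 - y ^ 2, y ^ 3, -y ^ 3]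

theorem core_mul_eigenvectors (y : R) :
    core y * eigenvectors y = eigenvectors y * diagonal (eigenvalues y) := by
  ext i k
  fin_cases i <;> fin_cases k <;>
    simp [core, eigenvectors, eigenvalues, mul_apply, Fin.sum_univ_four] <;> ring

theorem det_eigenvectors (y : R) :
    (eigenvectors y).det = -2 * y ^ 5 * (y ^ 2 - 1) * (y ^ 2 - 2) * (y ^ 4 + 4) := by
  rw [eigenvectors, det_succ_column_zero, Fin.sum_univ_four]
  simp [det_fin_three, Fin.succAbove, Fin.lt_def]
  ring

theorem smul_core_pow (x : R) (j : ℕ) :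
    x ^ 2 • core (x ^ j) =
      !![2 * x ^ 2, -2 * x ^ (2 * j + 1 + 1), -2 * x ^ (2 * (2 * j + 1)), x ^ (3 * (2 * j + 1) - 1);
         x ^ 2, -x ^ (2 * j + 1 + 1), -2 * x ^ (2 * (2 * j + 1)), x ^ (3 * (2 * j + 1) - 1);
         0, -x ^ (2 * j + 1 + 1), 0, 0;
         -x ^ 2, 0, 0, 0] := by
  rw [show 3 * (2 * j + 1) - 1 = 6 * j + 2 by omega]
  ext i k
  fin_cases i <;> fin_cases k <;> simp [core] <;> ring

theorem det_eigenvectors_X_pow_ne_zero {K : Type*} [Field K] (h2 : (2 : K) ≠ 0) {j : ℕ}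
    (hj : 0 < j) : (eigenvectors ((RatFunc.X : RatFunc K) ^ j)).det ≠ 0 := by
  have h (m : ℕ) (hm : 0 < m) (c : K) : ((RatFunc.X : RatFunc K) ^ j) ^ m - RatFunc.C c ≠ 0 := by
    rw [← pow_mul]; exact RatFunc.X_pow_sub_C_ne_zero (Nat.mul_pos hj hm) c
  have h2' : (2 : RatFunc K) ≠ 0 := by
    simpa only [map_ofNat] using (map_ne_zero RatFunc.C).mpr h2
  rw [det_eigenvectors]
  refine mul_ne_zero (mul_ne_zero (mul_ne_zero (mul_ne_zero (neg_ne_zero.mpr h2') ?_) ?_) ?_) ?_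
  · exact pow_ne_zero _ (pow_ne_zero _ RatFunc.X_ne_zero)
  · simpa using h 2 two_pos 1
  · simpa only [map_ofNat] using h 2 two_pos 2
  · simpa only [map_neg, map_ofNat, sub_neg_eq_add] using h 4 four_pos (-4)

end M14

theorem stmt18_general {F : Type*} [Field F] (p : ℕ) (hpodd : Odd p) [CharP F p]
    (q : ℕ) (hq3 : 3 ≤ q) (hqodd : Odd q)
    (A : Matrix (Fin 4) (Fin 4) (RatFunc F))
    (hA : A = !![2 * RatFunc.X ^ 2, -2 * RatFunc.X ^ (q + 1),
                 -2 * RatFunc.X ^ (2 * q), RatFunc.X ^ (3 * q - 1);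
                 RatFunc.X ^ 2, -RatFunc.X ^ (q + 1),
                 -2 * RatFunc.X ^ (2 * q), RatFunc.X ^ (3 * q - 1);
                 0, -RatFunc.X ^ (q + 1), 0, 0;
                 -RatFunc.X ^ 2, 0, 0, 0]) :
    ∃ P : Matrix (Fin 4) (Fin 4) (AlgebraicClosure (RatFunc F)), IsUnit P ∧
      (P⁻¹ * A.map (algebraMap (RatFunc F) (AlgebraicClosure (RatFunc F))) * P).IsDiag := by
  obtain ⟨j, rfl⟩ := hqodd
  set t : RatFunc F := RatFunc.X
  rw [← M14.smul_core_pow] at hA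
  have h2 : (2 : F) ≠ 0 := by
    apply Ring.two_ne_zero
    rw [ringChar.eq F p]
    rintro rfl
    exact absurd hpodd (by decide)
  have hAP : A * M14.eigenvectors (t ^ j) =
      M14.eigenvectors (t ^ j) * diagonal (t ^ 2 • M14.eigenvalues (t ^ j)) := by
    rw [hA, smul_mul_assoc, M14.core_mul_eigenvectors, diagonal_smul, Matrix.mul_smul]
  exact ⟨_, isDiag_inv_mul_map_mul_of_mul_eq_mul_diagonal _
    (M14.det_eigenvectors_X_pow_ne_zero h2 (by omega)).isUnit hAP⟩

/-- Over `F(t)` with `F` of odd characteristic and `q ≥ 3` an odd prime power, the matrix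
`M(1,4,q,t)` is diagonalizable over an algebraic closure of `F(t)` (its four eigenvalues
`0`, `2t² − t^(q+1)`, `±t^(k/2)` with `k = 4+3(q−1)` are pairwise distinct). -/
theorem stmt18 {F : Type*} [Field F] (p : ℕ) (hp : p.Prime) (hpodd : Odd p) [CharP F p]
    (q r : ℕ) (hq3 : 3 ≤ q) (hqodd : Odd q)
    (p' : ℕ) (hp' : p'.Prime) (hqpow : q = p' ^ r)
    (A : Matrix (Fin 4) (Fin 4) (RatFunc F))
    (hA : A = !![2 * RatFunc.X ^ 2, -2 * RatFunc.X ^ (q + 1),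
                 -2 * RatFunc.X ^ (2 * q), RatFunc.X ^ (3 * q - 1);
                 RatFunc.X ^ 2, -RatFunc.X ^ (q + 1),
                 -2 * RatFunc.X ^ (2 * q), RatFunc.X ^ (3 * q - 1);
                 0, -RatFunc.X ^ (q + 1), 0, 0;
                 -RatFunc.X ^ 2, 0, 0, 0]) :
    ∃ P : Matrix (Fin 4) (Fin 4) (AlgebraicClosure (RatFunc F)), IsUnit P ∧
      (P⁻¹ * A.map (algebraMap (RatFunc F) (AlgebraicClosure (RatFunc F))) * P).IsDiag :=
  stmt18_general p hpodd q hq3 hqodd A hA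
end
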